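/- Let X ⊆ ℝ^n be a nonempty (possibly unbounded) open set, let F : X × ℝ^M → ℝ be an arbitrary function (no continuity is required), let f : X → ℝ be a function, and let X_sol ⊆ X be a nonempty subset such that f(x) ∈ R_x for every x ∈ X_sol. Then for every subset A ⊆ X_sol that is discrete and closed in X there exists a smooth function U ∈ C^∞(X) such that T(x,D)U(x) = f(x) for every x ∈ A. -/

import Mathlib

open Set Topology Filter

/-- The partial derivative of `f` in the `i`-th coordinate direction. -/
noncomputable def pder {n : ℕ} (i : Fin n) (f : (Fin n → ℝ) → ℝ) : (Fin n → ℝ) → ℝ :=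
  fun x => fderiv ℝ f x (Pi.single i 1)

/-- The multi-index partial derivative `D^p f` for a multi-index `p : Fin n → ℕ`. -/
noncomputable def mderiv {n : ℕ} (p : Fin n → ℕ) (f : (Fin n → ℝ) → ℝ) : (Fin n → ℝ) → ℝ :=
  (List.finRange n).foldr (fun i g => (pder i)^[p i] g) f

/-- The nonlinear partial differential operator `T(x,D)` associated to `F`, where
`e : Fin M → (Fin n → ℕ)` enumerates the multi-indices `p` with `|p| ≤ m`:
`T(x,D)U(x) = F(x, (D^p U(x))_{|p| ≤ m})`. -/
noncomputable def TOp {n M : ℕ} (e : Fin M → (Fin n → ℕ))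
    (F : (Fin n → ℝ) → (Fin M → ℝ) → ℝ) (U : (Fin n → ℝ) → ℝ) : (Fin n → ℝ) → ℝ :=
  fun x => F x (fun i => mderiv (e i) U x)

/-!
At each `a ∈ A` pick `ξ_a` with `F(a, ξ_a) = f(a)` and let `P_a = ∑_p ξ_a(p) (x - a)^p / p!`,
so that `D^p P_a(a) = ξ_a(p)`. Choose radii `r_a` such that the balls `B(a, 2 r_a)` are pairwise
disjoint, and let `U = ∑_a φ_a P_a` with `φ_a` a bump function supported in `B(a, r_a)` and
equal to `1` near `a`. Because `A` is discrete and closed in `X`, only finitely many of these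
balls meet a small neighbourhood of any point of `X`, so `U` is smooth on `X`; near `a` it
coincides with `P_a`, hence `T(x,D)U(a) = F(a, ξ_a) = f(a)`.
-/

open Metric Function
open scoped ContDiff

section PartialDerivatives

variable {n : ℕ}

theorem contDiff_pder {f : (Fin n → ℝ) → ℝ} (hf : ContDiff ℝ ∞ f) (i : Fin n) :
    ContDiff ℝ ∞ (pder i f) :=
  (contDiff_infty_iff_fderiv.mp hf).2.clm_apply contDiff_const

theorem contDiff_iterate_pder {f : (Fin n → ℝ) → ℝ} (hf : ContDiff ℝ ∞ f) (i : Fin n) (t : ℕ) :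
    ContDiff ℝ ∞ ((pder i)^[t] f) := by
  induction t generalizing f with
  | zero => exact hf
  | succ t ih => exact ih (contDiff_pder hf i)

theorem contDiff_foldr_iterate_pder {f : (Fin n → ℝ) → ℝ} (hf : ContDiff ℝ ∞ f)
    (p : Fin n → ℕ) (L : List (Fin n)) :
    ContDiff ℝ ∞ (L.foldr (fun i g => (pder i)^[p i] g) f) := by
  induction L with
  | nil => exact hf
  | cons i L ih => exact contDiff_iterate_pder ih i (p i)

theorem pder_sum {ι : Type*} {s : Finset ι} {f : ι → (Fin n → ℝ) → ℝ}
    (hf : ∀ j ∈ s, Differentiable ℝ (f j)) (i : Fin n) :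
    pder i (∑ j ∈ s, f j) = ∑ j ∈ s, pder i (f j) := by
  funext x
  simp only [pder, fderiv_sum fun j hj => (hf j hj).differentiableAt,
    FunLike.coe_sum, Finset.sum_apply]

theorem iterate_pder_sum {ι : Type*} {s : Finset ι} {f : ι → (Fin n → ℝ) → ℝ}
    (hf : ∀ j ∈ s, ContDiff ℝ ∞ (f j)) (i : Fin n) (t : ℕ) :
    (pder i)^[t] (∑ j ∈ s, f j) = ∑ j ∈ s, (pder i)^[t] (f j) := by
  induction t generalizing f with
  | zero => rfl
  | succ t ih =>
    rw [iterate_succ_apply, pder_sum fun j hj => (hf j hj).differentiable (by simp),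
      ih fun j hj => contDiff_pder (hf j hj) i]
    rfl

theorem mderiv_sum {ι : Type*} {s : Finset ι} {f : ι → (Fin n → ℝ) → ℝ}
    (hf : ∀ j ∈ s, ContDiff ℝ ∞ (f j)) (p : Fin n → ℕ) :
    mderiv p (∑ j ∈ s, f j) = ∑ j ∈ s, mderiv p (f j) := by
  unfold mderiv
  induction List.finRange n with
  | nil => rfl
  | cons i L ih =>
    rw [List.foldr_cons, ih, iterate_pder_sum fun j hj => contDiff_foldr_iterate_pder (hf j hj) p L]
    rfl

theorem Filter.EventuallyEq.pder {f g : (Fin n → ℝ) → ℝ} {x : Fin n → ℝ} (h : f =ᶠ[𝓝 x] g)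
    (i : Fin n) : _root_.pder i f =ᶠ[𝓝 x] _root_.pder i g :=
  (h.fderiv (𝕜 := ℝ)).mono fun _ hy => by simp only [_root_.pder, hy]

theorem Filter.EventuallyEq.mderiv {f g : (Fin n → ℝ) → ℝ} {x : Fin n → ℝ} (h : f =ᶠ[𝓝 x] g)
    (p : Fin n → ℕ) : mderiv p f =ᶠ[𝓝 x] mderiv p g := by
  unfold _root_.mderiv
  induction List.finRange n with
  | nil => exact h
  | cons i L ih =>
    simp only [List.foldr_cons]
    generalize p i = t
    induction t with
    | zero => exact ih
    | succ t iht => simpa only [iterate_succ_apply'] using iht.pder i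

end PartialDerivatives

section ShiftedMonomial

variable {n : ℕ}

noncomputable def shiftedMonomial (c : ℝ) (a : Fin n → ℝ) (q : Fin n → ℕ) :
    (Fin n → ℝ) → ℝ :=
  fun x => c * ∏ k, (x k - a k) ^ q k

theorem contDiff_shiftedMonomial (c : ℝ) (a : Fin n → ℝ) (q : Fin n → ℕ) :
    ContDiff ℝ ∞ (shiftedMonomial c a q) :=
  contDiff_const.mul <| contDiff_prod fun k _ =>
    ((contDiff_apply ℝ ℝ k).sub contDiff_const).pow _

theorem pder_shiftedMonomial (c : ℝ) (a : Fin n → ℝ) (q : Fin n → ℕ) (i : Fin n) :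
    pder i (shiftedMonomial c a q) = shiftedMonomial (c * q i) a (update q i (q i - 1)) := by
  funext x
  have hfactor : ∀ k, HasFDerivAt (fun y : Fin n → ℝ => (y k - a k) ^ q k)
      ((q k * (x k - a k) ^ (q k - 1)) • ContinuousLinearMap.proj k) x := fun k => by
    have hsub : HasFDerivAt (fun y : Fin n → ℝ => y k - a k) (ContinuousLinearMap.proj k) x :=
      ((ContinuousLinearMap.proj k : (Fin n → ℝ) →L[ℝ] ℝ).hasFDerivAt).sub_const (a k)
    exact (hasDerivAt_pow (q k) (x k - a k)).comp_hasFDerivAt x hsub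
  have hprod :=
    ((HasFDerivAt.finsetProd (u := Finset.univ) fun k _ => hfactor k).const_mul c).fderiv
  change fderiv ℝ (fun y => c * ∏ k, (y k - a k) ^ q k) x (Pi.single i 1) =
    c * q i * ∏ k, (x k - a k) ^ update q i (q i - 1) k
  rw [hprod]
  simp only [FunLike.coe_smul, Pi.smul_apply, FunLike.coe_sum, Finset.sum_apply,
    ContinuousLinearMap.proj_apply, smul_eq_mul, Pi.single_apply, mul_ite, mul_one, mul_zero,
    Finset.sum_ite_eq', Finset.mem_univ, if_true]
  have hupdate : ∏ k, (x k - a k) ^ update q i (q i - 1) k =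
      (x i - a i) ^ (q i - 1) * ∏ k ∈ Finset.univ.erase i, (x k - a k) ^ q k := by
    rw [← Finset.mul_prod_erase _ _ (Finset.mem_univ i), update_self]
    exact congrArg _ <| Finset.prod_congr rfl fun k hk => by
      rw [update_of_ne (Finset.ne_of_mem_erase hk)]
  rw [hupdate]
  ring

theorem iterate_pder_shiftedMonomial (c : ℝ) (a : Fin n → ℝ) (q : Fin n → ℕ) (i : Fin n)
    (t : ℕ) : (pder i)^[t] (shiftedMonomial c a q) =
      shiftedMonomial (c * (q i).descFactorial t) a (update q i (q i - t)) := by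
  induction t with
  | zero => simp
  | succ t ih =>
    rw [iterate_succ_apply', ih, pder_shiftedMonomial, update_self, update_idem,
      Nat.descFactorial_succ, Nat.sub_sub]
    push_cast
    ring_nf

theorem foldr_iterate_pder_shiftedMonomial (p : Fin n → ℕ) {L : List (Fin n)} (hL : L.Nodup)
    (c : ℝ) (a : Fin n → ℝ) (q : Fin n → ℕ) :
    L.foldr (fun i g => (pder i)^[p i] g) (shiftedMonomial c a q) =
      shiftedMonomial (c * (L.map fun i => ((q i).descFactorial (p i) : ℝ)).prod) a
        (fun i => if i ∈ L then q i - p i else q i) := by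
  induction L with
  | nil => simp
  | cons i L ih =>
    obtain ⟨hiL, hL⟩ := List.nodup_cons.mp hL
    rw [List.foldr_cons, ih hL, iterate_pder_shiftedMonomial, if_neg hiL, List.map_cons,
      List.prod_cons, mul_assoc, mul_comm (List.prod _)]
    congr 1
    funext k
    by_cases hk : k = i <;> simp [hk]

theorem mderiv_shiftedMonomial (p : Fin n → ℕ) (c : ℝ) (a : Fin n → ℝ) (q : Fin n → ℕ) :
    mderiv p (shiftedMonomial c a q) =
      shiftedMonomial (c * ∏ i, ((q i).descFactorial (p i) : ℝ)) a (q - p) := by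
  rw [mderiv, foldr_iterate_pder_shiftedMonomial p (List.nodup_finRange n), Fin.prod_univ_def]
  simp only [List.mem_finRange, if_true]
  rfl

theorem shiftedMonomial_self (c : ℝ) (a : Fin n → ℝ) (q : Fin n → ℕ) :
    shiftedMonomial c a q a = if q = 0 then c else 0 := by
  split_ifs with hq
  · simp [shiftedMonomial, hq]
  · obtain ⟨k, hk⟩ := Function.ne_iff.mp hq
    simp only [shiftedMonomial, sub_self]
    rw [Finset.prod_eq_zero (Finset.mem_univ k) (zero_pow hk), mul_zero]

theorem mderiv_shiftedMonomial_self (p : Fin n → ℕ) (c : ℝ) (a : Fin n → ℝ) (q : Fin n → ℕ) :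
    mderiv p (shiftedMonomial c a q) a = if q = p then c * ∏ i, ((p i).factorial : ℝ) else 0 := by
  rw [mderiv_shiftedMonomial, shiftedMonomial_self]
  by_cases hqp : q = p
  · simp [hqp, Nat.descFactorial_self]
  · rw [if_neg hqp]
    split_ifs with hsub
    · obtain ⟨-, k, hk⟩ := Pi.lt_def.mp (lt_of_le_of_ne (tsub_eq_zero_iff_le.mp hsub) hqp)
      have hzero : ((q k).descFactorial (p k) : ℝ) = 0 := by
        simp [Nat.descFactorial_eq_zero_iff_lt.mpr hk]
      rw [Finset.prod_eq_zero (Finset.mem_univ k) hzero, mul_zero]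
    · rfl

end ShiftedMonomial

theorem exists_contDiff_mderiv_eq {n : ℕ} {ι : Type*} [Fintype ι] {e : ι → Fin n → ℕ}
    (he : Injective e) (a : Fin n → ℝ) (ξ : ι → ℝ) :
    ∃ P : (Fin n → ℝ) → ℝ, ContDiff ℝ ∞ P ∧ ∀ j, mderiv (e j) P a = ξ j := by
  classical
  set c : ι → ℝ := fun j => ξ j / ∏ k, ((e j k).factorial : ℝ)
  refine ⟨∑ j, shiftedMonomial (c j) a (e j), ?_, fun j => ?_⟩
  · rw [Finset.sum_fn]
    exact ContDiff.sum fun j _ => contDiff_shiftedMonomial _ a _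
  have hfact : ∏ k, ((e j k).factorial : ℝ) ≠ 0 :=
    Finset.prod_ne_zero_iff.mpr fun k _ => Nat.cast_ne_zero.mpr (Nat.factorial_ne_zero _)
  rw [mderiv_sum fun j _ => contDiff_shiftedMonomial _ a _, Finset.sum_apply]
  simp only [mderiv_shiftedMonomial_self, he.eq_iff, Finset.sum_ite_eq', Finset.mem_univ, if_true,
    c, div_mul_cancel₀ _ hfact]

section DiscreteSets

variable {α : Type*} [PseudoMetricSpace α] {A : Set α}

theorem exists_pos_radius_two_mul_add_le_dist
    (hA : ∀ a ∈ A, ∃ V ∈ 𝓝 a, (V ∩ A).Subsingleton) :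
    ∃ r : A → ℝ, (∀ a, 0 < r a) ∧ ∀ a b : A, a ≠ b → 2 * (r a + r b) ≤ dist (a : α) b := by
  have hball : ∀ a : A, ∃ ε > 0, (ball (a : α) ε ∩ A).Subsingleton := fun a => by
    obtain ⟨V, hV, hVA⟩ := hA a a.2
    obtain ⟨ε, hε, hεV⟩ := Metric.mem_nhds_iff.mp hV
    exact ⟨ε, hε, hVA.anti (inter_subset_inter_left A hεV)⟩
  choose ε hε hεA using hball
  have hle : ∀ a b : A, a ≠ b → ε a ≤ dist (a : α) b := fun a b hab => by
    by_contra! hlt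
    exact hab (Subtype.ext (hεA a ⟨mem_ball_self (hε a), a.2⟩ ⟨mem_ball'.mpr hlt, b.2⟩))
  refine ⟨fun a => ε a / 4, fun a => by linarith [hε a], fun a b hab => ?_⟩
  linarith [hle a b hab, dist_comm (a : α) b, hle b a hab.symm]

theorem finite_setOf_ball_inter_ball_nonempty {r : A → ℝ}
    (hr : ∀ a b : A, a ≠ b → 2 * (r a + r b) ≤ dist (a : α) b) {x : α} {ε : ℝ}
    (hx : (ball x ε ∩ A).Subsingleton) :
    {a : A | (ball (a : α) (r a) ∩ ball x (ε / 2)).Nonempty}.Finite := by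
  have hnear : {a : A | (a : α) ∈ ball x ε}.Subsingleton := fun a ha b hb =>
    Subtype.ext (hx ⟨ha, a.2⟩ ⟨hb, b.2⟩)
  have hlarge : {a : A | x ∈ ball (a : α) (2 * r a)}.Subsingleton := fun a ha b hb => by
    by_contra hab
    linarith [hr a b hab, dist_triangle_left (a : α) b x, mem_ball.mp ha, mem_ball.mp hb]
  refine (hnear.finite.union hlarge.finite).subset fun a ⟨y, hya, hyx⟩ => ?_
  rw [mem_ball] at hya hyx
  have hxa : dist x a < ε / 2 + r a := by linarith [dist_triangle_left x (a : α) y]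
  by_cases hax : dist (a : α) x < ε
  · exact Or.inl hax
  · refine Or.inr (mem_ball.mpr ?_)
    linarith [dist_comm x (a : α)]

end DiscreteSets

theorem contDiffOn_finsum {ι 𝕜 E F : Type*} [NontriviallyNormedField 𝕜] [NormedAddCommGroup E]
    [NormedSpace 𝕜 E] [NormedAddCommGroup F] [NormedSpace 𝕜 F] {n : WithTop ℕ∞}
    {f : ι → E → F} {s : Set E} (hf : ∀ i, ContDiff 𝕜 n (f i))
    (hfin : ∀ x ∈ s, ∃ t ∈ 𝓝 x, {i | (support (f i) ∩ t).Nonempty}.Finite) :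
    ContDiffOn 𝕜 n (fun x => ∑ᶠ i, f i x) s := fun x hx => by
  obtain ⟨t, ht, htfin⟩ := hfin x hx
  have hsum : ∀ᶠ y in 𝓝 x, ∑ᶠ i, f i y = ∑ i ∈ htfin.toFinset, f i y :=
    Filter.mem_of_superset ht fun y hy => finsum_eq_sum_of_support_subset _ fun i hi =>
      htfin.mem_toFinset.mpr ⟨y, hi, hy⟩
  exact ((ContDiff.sum fun i _ => hf i).contDiffAt.congr_of_eventuallyEq hsum).contDiffWithinAt

theorem exists_contDiffOn_eventuallyEq_of_discrete {E F : Type*} [NormedAddCommGroup E]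
    [NormedSpace ℝ E] [HasContDiffBump E] [NormedAddCommGroup F] [NormedSpace ℝ F]
    {n : ℕ∞} {X A : Set E} (hAX : A ⊆ X)
    (hA : ∀ x ∈ X, ∃ V ∈ 𝓝 x, (V ∩ A).Subsingleton) {P : A → E → F}
    (hP : ∀ a, ContDiff ℝ n (P a)) :
    ∃ U : E → F, ContDiffOn ℝ n U X ∧ ∀ a : A, U =ᶠ[𝓝 (a : E)] P a := by
  obtain ⟨r, hr0, hr⟩ := exists_pos_radius_two_mul_add_le_dist fun a ha => hA a (hAX ha)
  let B : ∀ a : A, ContDiffBump (a : E) := fun a => ⟨r a / 2, r a, by linarith [hr0 a],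
    by linarith [hr0 a]⟩
  have hsupport : ∀ a, support (fun x => B a x • P a x) ⊆ ball (a : E) (r a) := fun a =>
    (support_smul_subset_left _ _).trans (B a).support_eq.subset
  refine ⟨fun x => ∑ᶠ a, B a x • P a x, contDiffOn_finsum (fun a => (B a).contDiff.smul (hP a))
    fun x hx => ?_, fun a => ?_⟩
  · obtain ⟨V, hV, hVA⟩ := hA x hx
    obtain ⟨ε, hε, hεV⟩ := Metric.mem_nhds_iff.mp hV
    refine ⟨ball x (ε / 2), ball_mem_nhds x (by positivity), ?_⟩
    have hεA : (ball x ε ∩ A).Subsingleton := hVA.anti (inter_subset_inter_left A hεV)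
    exact (finite_setOf_ball_inter_ball_nonempty hr hεA).subset
      fun b ⟨y, hyb, hyx⟩ => ⟨y, hsupport b hyb, hyx⟩
  · filter_upwards [(B a).eventuallyEq_one, ball_mem_nhds (a : E) (hr0 a)] with y hy hya
    have hothers : ∀ b ≠ a, B b y • P b y = 0 := fun b hba => by
      refine smul_eq_zero_of_left ((B b).zero_of_le_dist (show r b ≤ dist y b from ?_)) _
      linarith [hr b a hba, hr0 a, hr0 b, dist_triangle_left (b : E) a y, mem_ball.mp hya]
    rw [finsum_eq_single _ a hothers, hy, Pi.one_apply, one_smul]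

theorem exact_solution_on_discrete_sets_general
    {n M : ℕ} (X : Set (Fin n → ℝ))
    (e : Fin M → (Fin n → ℕ)) (he : Function.Injective e)
    (F : (Fin n → ℝ) → (Fin M → ℝ) → ℝ) (f : (Fin n → ℝ) → ℝ)
    (Xsol : Set (Fin n → ℝ)) (hXsolsub : Xsol ⊆ X)
    (hrc : ∀ x ∈ Xsol, f x ∈ Set.range (F x)) :
    ∀ A : Set (Fin n → ℝ), A ⊆ Xsol →
      (∀ x ∈ X, ∃ V ∈ nhds x, (V ∩ A).Subsingleton) →
      ∃ U : (Fin n → ℝ) → ℝ, ContDiffOn ℝ (⊤ : ℕ∞) U X ∧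
        ∀ x ∈ A, TOp e F U x = f x := by
  intro A hAsol hA
  choose ξ hξ using fun a : A => hrc a (hAsol a.2)
  choose P hPsmooth hP using fun a : A => exists_contDiff_mderiv_eq he a (ξ a)
  obtain ⟨U, hU, hUP⟩ :=
    exists_contDiffOn_eventuallyEq_of_discrete (hAsol.trans hXsolsub) hA hPsmooth
  refine ⟨U, hU, fun a ha => ?_⟩
  have hderiv : (fun i => mderiv (e i) U a) = ξ ⟨a, ha⟩ :=
    funext fun i => ((hUP ⟨a, ha⟩).mderiv (e i)).eq_of_nhds.trans (hP ⟨a, ha⟩ i)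
  exact (congrArg (F a) hderiv).trans (hξ ⟨a, ha⟩)

/-- **Proposition 2.** Let `X ⊆ ℝⁿ` be a nonempty open set, `F : X × ℝᴹ → ℝ` an arbitrary
function, `f : X → ℝ` a function, and `X_sol ⊆ X` nonempty with `f(x) ∈ R_x` for all
`x ∈ X_sol`. Then for every `A ⊆ X_sol` which is discrete and closed in `X` (every point of
`X` has a neighbourhood meeting `A` in at most one point) there is `U ∈ C^∞(X)` with
`T(x,D)U(x) = f(x)` for all `x ∈ A`. -/
theorem exact_solution_on_discrete_sets
    {n m M : ℕ} (X : Set (Fin n → ℝ)) (hXopen : IsOpen X) (hXne : X.Nonempty)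
    (e : Fin M → (Fin n → ℕ)) (he : Function.Injective e)
    (hrange : ∀ p : Fin n → ℕ, (∑ i, p i) ≤ m ↔ p ∈ Set.range e)
    (F : (Fin n → ℝ) → (Fin M → ℝ) → ℝ) (f : (Fin n → ℝ) → ℝ)
    (Xsol : Set (Fin n → ℝ)) (hXsolsub : Xsol ⊆ X) (hXsolne : Xsol.Nonempty)
    (hrc : ∀ x ∈ Xsol, f x ∈ Set.range (F x)) :
    ∀ A : Set (Fin n → ℝ), A ⊆ Xsol →
      (∀ x ∈ X, ∃ V ∈ nhds x, (V ∩ A).Subsingleton) →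
      ∃ U : (Fin n → ℝ) → ℝ, ContDiffOn ℝ (⊤ : ℕ∞) U X ∧
        ∀ x ∈ A, TOp e F U x = f x :=
  exact_solution_on_discrete_sets_general X e he F f Xsol hXsolsub hrc
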